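/- arXiv:1512.06624 — 5 statements merged into one kernel-verified Lean document; each statement's English description precedes it below -/
import Mathlib

section
/- Let q ≥ 2, let G be a finite connected (q+1)-regular graph, and let k ≥ 1 be strictly less than the minimal injectivity radius min_{x∈V} ρ(x). Then for every K ∈ H_k one has ‖K̂_G‖²_HSN = ‖K‖²_{H_k}; in particular the linear map K ↦ K̂_G from H_k to operators on ℓ²(V) is injective. -/
/-!
Below the injectivity radius the ball of radius `k` around a vertex `x` induces a forest, and a
non-backtracking path of length `k` from `x` is a walk in that forest whose consecutive edges are
distinct, hence a path; since paths in a forest are determined by their endpoints, every kernel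
entry `K_G(x, y)` is a sum over at most one non-backtracking path. The Hilbert–Schmidt sum over
pairs `(x, y)` is then the sum of `|K(ω)|²` regrouped by endpoints.
-/

open Classical Finset

noncomputable section

def IsNB {V : Type} (G : SimpleGraph V) {k : ℕ} (ω : Fin (k + 1) → V) : Prop :=
  (∀ i j : Fin (k + 1), (j : ℕ) = (i : ℕ) + 1 → G.Adj (ω i) (ω j)) ∧
  (∀ i j : Fin (k + 1), (j : ℕ) = (i : ℕ) + 2 → ω i ≠ ω j)

def nbFinset {V : Type} [Fintype V] (G : SimpleGraph V) (k : ℕ) :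
    Finset (Fin (k + 1) → V) :=
  Finset.univ.filter fun ω => IsNB G ω

def RegularOfDegree {V : Type} [Fintype V] (G : SimpleGraph V) (d : ℕ) : Prop :=
  ∀ x : V, (Finset.univ.filter fun y => G.Adj x y).card = d

def ballHasCycle {V : Type} (G : SimpleGraph V) (x : V) (r : ℕ) : Prop :=
  ∃ (y : V) (w : G.Walk y y), w.IsCycle ∧ ∀ v ∈ w.support, G.dist x v ≤ r

def hNormSq {V : Type} [Fintype V] (G : SimpleGraph V) (k : ℕ)
    (K : (Fin (k + 1) → V) → ℂ) : ℝ :=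
  (1 / (Fintype.card V : ℝ)) * ∑ ω ∈ nbFinset G k, ‖K ω‖ ^ 2

/-- The kernel `K_G(x,y) = ∑ K(ω)`, summed over non-backtracking paths `ω ∈ B_k` from `x`
to `y`. -/
def kernelG {V : Type} [Fintype V] (G : SimpleGraph V) (k : ℕ)
    (K : (Fin (k + 1) → V) → ℂ) (x y : V) : ℂ :=
  ∑ ω ∈ (nbFinset G k).filter fun ω => ω 0 = x ∧ ω (Fin.last k) = y, K ω

/-- The normalized Hilbert-Schmidt squared norm
`‖K̂_G‖²_HSN = (1/|V|) ∑_{x,y} |K_G(x,y)|²`. -/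
def hsnNormSq {V : Type} [Fintype V] (G : SimpleGraph V) (k : ℕ)
    (K : (Fin (k + 1) → V) → ℂ) : ℝ :=
  (1 / (Fintype.card V : ℝ)) * ∑ x : V, ∑ y : V, ‖kernelG G k K x y‖ ^ 2

namespace Finset

variable {ι κ M N : Type*} [AddCommMonoid M] [AddCommMonoid N]
  {s : Finset ι} {f : ι → κ}

theorem sum_filter_apply_eq_of_injOn [DecidableEq κ] (hf : Set.InjOn f s) (g : ι → M) {a : ι}
    (ha : a ∈ s) :
    ∑ i ∈ s with f i = f a, g i = g a :=
  sum_eq_single_of_mem a (mem_filter.2 ⟨ha, rfl⟩) fun _ hb hne =>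
    (hne (hf (mem_filter.1 hb).1 ha (mem_filter.1 hb).2)).elim

theorem sum_comp_sum_fiberwise_of_injOn [Fintype κ] [DecidableEq κ] (hf : Set.InjOn f s)
    (g : ι → M) {φ : M → N} (hφ : φ 0 = 0) :
    ∑ j, φ (∑ i ∈ s with f i = j, g i) = ∑ i ∈ s, φ (g i) := by
  rw [← sum_fiberwise s f fun i => φ (g i)]
  refine sum_congr rfl fun j _ => ?_
  by_cases hj : ∃ a ∈ s, f a = j
  · obtain ⟨a, ha, rfl⟩ := hj
    rw [sum_filter_apply_eq_of_injOn hf g ha, sum_filter_apply_eq_of_injOn hf _ ha]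
  · have hempty : s.filter (f · = j) = ∅ :=
      filter_eq_empty_iff.2 fun a ha haj => hj ⟨a, ha, haj⟩
    simp [hempty, hφ]

end Finset

namespace SimpleGraph

variable {W : Type*} {H : SimpleGraph W}

theorem Walk.isChain_ne_edges_iff {u v : W} (p : H.Walk u v) :
    p.edges.IsChain (· ≠ ·) ↔
      ∀ (i : ℕ) (hi : i + 2 < p.support.length), p.support[i] ≠ p.support[i + 2] := by
  have sym2_eq_iff {a b c : W} : s(a, b) = s(b, c) ↔ a = c := by
    rw [Sym2.eq_iff]; grind
  rw [edges_eq_zipWith_support, List.isChain_iff_getElem]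
  simp only [List.length_zipWith, List.length_tail, List.getElem_zipWith, List.getElem_tail, ne_eq,
    sym2_eq_iff]
  exact forall_congr' fun i => ⟨fun h hi => h (by omega), fun h hi => h (by omega)⟩

def Walk.ofFn {n : ℕ} (σ : Fin (n + 1) → W) (hσ : (List.ofFn σ).IsChain H.Adj) :
    H.Walk (σ 0) (σ (Fin.last n)) :=
  (Walk.ofSupport (List.ofFn σ) (by simp) hσ).copy (by simp) (by rw [List.getLast_ofFn]; rfl)

@[simp]
theorem Walk.support_ofFn {n : ℕ} (σ : Fin (n + 1) → W) (hσ : (List.ofFn σ).IsChain H.Adj) :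
    (Walk.ofFn σ hσ).support = List.ofFn σ := by
  simp [Walk.ofFn]

@[simp]
theorem Walk.length_ofFn {n : ℕ} (σ : Fin (n + 1) → W) (hσ : (List.ofFn σ).IsChain H.Adj) :
    (Walk.ofFn σ hσ).length = n := by
  simp [Walk.ofFn]

theorem Walk.dist_le_length_of_mem_support {u v x : W} (p : H.Walk u v) (hx : x ∈ p.support) :
    H.dist u x ≤ p.length :=
  (dist_le _).trans (p.length_takeUntil_le_length hx)

theorem Walk.eq_of_isChain_ne_edges {s : Set W} (hs : (H.induce s).IsAcyclic) {u v : W}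
    {p q : H.Walk u v} (hps : ∀ x ∈ p.support, x ∈ s) (hqs : ∀ x ∈ q.support, x ∈ s)
    (hp : p.edges.IsChain (· ≠ ·)) (hq : q.edges.IsChain (· ≠ ·)) : p = q := by
  have isPath_induce : ∀ (r : H.Walk u v) (hrs : ∀ x ∈ r.support, x ∈ s),
      r.edges.IsChain (· ≠ ·) → (r.induce s hrs).IsPath := by
    intro r hrs hr
    have hedges := congrArg edges (r.map_induce hrs)
    rw [edges_map] at hedges
    have hmap : ((r.induce s hrs).edges.map
        (Sym2.map (Embedding.induce (G := H) s).toHom)).IsChain (· ≠ ·) := by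
      rwa [hedges]
    rw [List.isChain_map] at hmap
    exact (hs.isPath_iff_isChain _).2 (hmap.imp fun _ _ hne heq => hne (heq ▸ rfl))
  have hpaths :=
    (hs.subsingleton_path _ _).elim ⟨_, isPath_induce p hps hp⟩ ⟨_, isPath_induce q hqs hq⟩
  rw [← p.map_induce hps, ← q.map_induce hqs]
  exact congrArg (fun r => r.1.map (Embedding.induce s).toHom) hpaths

end SimpleGraph

section NonBacktracking

variable {V : Type} {G : SimpleGraph V} {k : ℕ} {ω ω₁ ω₂ : Fin (k + 1) → V}

theorem isAcyclic_induce_of_not_ballHasCycle {x : V} {r : ℕ} (h : ¬ ballHasCycle G x r) :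
    (G.induce {v | G.dist x v ≤ r}).IsAcyclic := by
  intro a c hc
  refine h ⟨a, c.map (SimpleGraph.Embedding.induce _).toHom, hc.map Subtype.val_injective, ?_⟩
  intro v hv
  obtain ⟨b, -, rfl⟩ := List.mem_map.mp ((c.support_map _).symm ▸ hv)
  exact b.2

theorem IsNB.isChain_adj (h : IsNB G ω) : (List.ofFn ω).IsChain G.Adj :=
  List.isChain_ofFn.2 fun _ _ => h.1 _ _ rfl

def IsNB.walk (h : IsNB G ω) : G.Walk (ω 0) (ω (Fin.last k)) :=
  SimpleGraph.Walk.ofFn ω h.isChain_adj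

theorem IsNB.isChain_ne_edges_walk (h : IsNB G ω) : h.walk.edges.IsChain (· ≠ ·) := by
  rw [SimpleGraph.Walk.isChain_ne_edges_iff]
  simp only [IsNB.walk, SimpleGraph.Walk.support_ofFn, List.getElem_ofFn]
  exact fun _ _ => h.2 _ _ rfl

theorem IsNB.eq_of_endpoints_eq {r : ℕ} (hk : k ≤ r) (hball : ¬ ballHasCycle G (ω₁ 0) r)
    (h₁ : IsNB G ω₁) (h₂ : IsNB G ω₂) (h0 : ω₁ 0 = ω₂ 0)
    (hlast : ω₁ (Fin.last k) = ω₂ (Fin.last k)) : ω₁ = ω₂ := by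
  have mem_ball {ω : Fin (k + 1) → V} (h : IsNB G ω) (hω : ω 0 = ω₁ 0) :
      ∀ x ∈ h.walk.support, x ∈ {v | G.dist (ω₁ 0) v ≤ r} := fun x hx =>
    hω ▸ (h.walk.dist_le_length_of_mem_support hx).trans (by simpa [IsNB.walk] using hk)
  have hwalk := SimpleGraph.Walk.eq_of_isChain_ne_edges
    (isAcyclic_induce_of_not_ballHasCycle hball) (p := h₁.walk)
    (q := h₂.walk.copy h0.symm hlast.symm) (mem_ball h₁ rfl)
    (by simpa using mem_ball h₂ h0.symm) h₁.isChain_ne_edges_walk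
    (by simpa using h₂.isChain_ne_edges_walk)
  have hsupport := congrArg SimpleGraph.Walk.support hwalk
  simp only [IsNB.walk, SimpleGraph.Walk.support_copy, SimpleGraph.Walk.support_ofFn] at hsupport
  exact List.ofFn_injective hsupport

theorem injOn_endpoints_nbFinset [Fintype V] {r : ℕ} (hk : k ≤ r)
    (hinj : ∀ x : V, ¬ ballHasCycle G x r) :
    Set.InjOn (fun ω : Fin (k + 1) → V => (ω 0, ω (Fin.last k))) ↑(nbFinset G k) := by
  intro ω₁ h₁ ω₂ h₂ h
  simp only [nbFinset, coe_filter, mem_univ, true_and, Set.mem_ofPred_eq, Prod.mk.injEq]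
    at h₁ h₂ h
  exact h₁.eq_of_endpoints_eq hk (hinj _) h₂ h.1 h.2

end NonBacktracking

theorem kernelG_eq_sum_filter_endpoints {V : Type} [Fintype V] (G : SimpleGraph V) (k : ℕ)
    (K : (Fin (k + 1) → V) → ℂ) (x y : V) :
    kernelG G k K x y = ∑ ω ∈ nbFinset G k with (ω 0, ω (Fin.last k)) = (x, y), K ω := by
  simp only [kernelG, Prod.mk.injEq]

theorem hsn_norm_eq_below_injectivity_radius_general
    (V : Type) [Fintype V] (G : SimpleGraph V)
    (k : ℕ)
    (hinj : ∀ x : V, ¬ ballHasCycle G x (k + 1)) :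
    (∀ K : (Fin (k + 1) → V) → ℂ, hsnNormSq G k K = hNormSq G k K) ∧
    (∀ K₁ K₂ : (Fin (k + 1) → V) → ℂ,
      (∀ x y : V, kernelG G k K₁ x y = kernelG G k K₂ x y) →
      ∀ ω ∈ nbFinset G k, K₁ ω = K₂ ω) := by
  have hinjOn := injOn_endpoints_nbFinset (Nat.le_succ k) hinj
  refine ⟨fun K => ?_, fun K₁ K₂ hK ω hω => ?_⟩
  · rw [hsnNormSq, hNormSq,
      ← Finset.sum_comp_sum_fiberwise_of_injOn hinjOn K (φ := (‖·‖ ^ 2)) (by simp),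
      ← Fintype.sum_prod_type']
    simp only [kernelG_eq_sum_filter_endpoints]
  · simpa only [kernelG_eq_sum_filter_endpoints, Finset.sum_filter_apply_eq_of_injOn hinjOn _ hω]
      using hK (ω 0) (ω (Fin.last k))

/-- Proposition 2 (i) of the paper: below the injectivity radius, the normalized Hilbert-Schmidt
norm of `K̂_G` equals the `H_k`-norm of `K`; in particular `K ↦ K̂_G` is injective on `H_k`. -/
theorem hsn_norm_eq_below_injectivity_radius
    (q : ℕ) (hq : 2 ≤ q)
    (V : Type) [Fintype V] (G : SimpleGraph V)
    (hconn : G.Connected) (hreg : RegularOfDegree G (q + 1))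
    (k : ℕ) (hk : 1 ≤ k)
    (hinj : ∀ x : V, ¬ ballHasCycle G x (k + 1)) :
    (∀ K : (Fin (k + 1) → V) → ℂ, hsnNormSq G k K = hNormSq G k K) ∧
    (∀ K₁ K₂ : (Fin (k + 1) → V) → ℂ,
      (∀ x y : V, kernelG G k K₁ x y = kernelG G k K₂ x y) →
      ∀ ω ∈ nbFinset G k, K₁ ω = K₂ ω) :=
  hsn_norm_eq_below_injectivity_radius_general V G k hinj

end
end

section
/- Let q ≥ 1, let G be a finite (q+1)-regular graph, let φ : V → ℂ satisfy Aφ = λφ, and let ε ∈ ℂ be a nonzero root of qε² − λε + 1 = 0. Define f : B → ℂ by f(e) = φ(t(e)) − ε·φ(o(e)). Then A^♯ f = ε^{−1} f. In particular f is an eigenvector of the non-backtracking operator A^♯ with eigenvalue qε', where ε' is the other root of qε² − λε + 1 = 0 (so that εε' = 1/q). -/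
open Classical Finset

noncomputable section

/-- Eigenfunctions of the adjacency operator give rise to eigenfunctions of the
non-backtracking operator `A^♯` (§ 5.1 of the paper).  A directed edge is a pair `(x,y)` with
`G.Adj x y`; `f(x,y) = φ(y) - ε φ(x)` and
`(A^♯ f)(x,y) = ∑_{z ~ y, z ≠ x} f(y,z)`. -/
theorem nonbacktracking_eigenfunction
    (q : ℕ) (hq : 1 ≤ q)
    (V : Type) [Fintype V] (G : SimpleGraph V)
    (hreg : RegularOfDegree G (q + 1))
    (φ : V → ℂ) (lam : ℂ)
    (heig : ∀ x : V, (∑ y : V, if G.Adj x y then φ y else 0) = lam * φ x)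
    (ε : ℂ) (hε : ε ≠ 0) (hroot : (q : ℂ) * ε ^ 2 - lam * ε + 1 = 0) :
    (∀ x y : V, G.Adj x y →
      (∑ z : V, if G.Adj y z ∧ z ≠ x then (φ z - ε * φ y) else 0)
        = ε⁻¹ * (φ y - ε * φ x)) ∧
    (∀ ε' : ℂ, (q : ℂ) * ε' ^ 2 - lam * ε' + 1 = 0 → ε * ε' = 1 / (q : ℂ) →
      ∀ x y : V, G.Adj x y →
        (∑ z : V, if G.Adj y z ∧ z ≠ x then (φ z - ε * φ y) else 0)
          = ((q : ℂ) * ε') * (φ y - ε * φ x)) := by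
  have key : ∀ x y : V, G.Adj x y →
      (∑ z : V, if G.Adj y z ∧ z ≠ x then (φ z - ε * φ y) else 0)
        = ε⁻¹ * (φ y - ε * φ x) := by
    intro x y hxy
    have hyx : G.Adj y x := hxy.symm
    have hsplit : ∀ z : V,
        (if G.Adj y z ∧ z ≠ x then (φ z - ε * φ y) else 0)
          = (if G.Adj y z then (φ z - ε * φ y) else 0)
            - (if z = x then (φ x - ε * φ y) else 0) := by
      intro z
      by_cases hz : z = x
      · subst hz
        simp [hyx]
      · simp [hz]
    rw [Finset.sum_congr rfl fun z _ => hsplit z, Finset.sum_sub_distrib]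
    have h2 : (∑ z : V, if z = x then (φ x - ε * φ y) else 0) = φ x - ε * φ y := by
      simp
    have h1 : (∑ z : V, if G.Adj y z then (φ z - ε * φ y) else 0)
        = lam * φ y - ((q : ℂ) + 1) * (ε * φ y) := by
      have : ∀ z : V, (if G.Adj y z then (φ z - ε * φ y) else 0)
          = (if G.Adj y z then φ z else 0) - (if G.Adj y z then ε * φ y else 0) := by
        intro z; by_cases h : G.Adj y z <;> simp [h]
      rw [Finset.sum_congr rfl fun z _ => this z, Finset.sum_sub_distrib, heig y]
      congr 1
      rw [← Finset.sum_filter, Finset.sum_const, hreg y]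
      ring
    rw [h1, h2]
    have hε' : lam - (q : ℂ) * ε = ε⁻¹ := by
      field_simp
      linear_combination -hroot
    have hinv : ε * ε⁻¹ = 1 := mul_inv_cancel₀ hε
    linear_combination φ y * hε' + φ x * hinv
  refine ⟨key, ?_⟩
  intro ε' hroot' hprod x y hxy
  have hq0 : (q : ℂ) ≠ 0 := Nat.cast_ne_zero.mpr (by omega)
  have : (q : ℂ) * ε' = ε⁻¹ := by
    field_simp at hprod ⊢
    linear_combination hprod
  rw [key x y hxy, this]

end
end

section
/- Let q ≥ 2, let G be a finite connected (q+1)-regular graph, and let ψ : V → ℝ be a real eigenfunction of A with eigenvalue λ ∈ (−2√q, 2√q); write λ = 2√q cos(s ln q) with s ∈ ℝ and set ε = q^{−1/2−is}, f(e) = ψ(t(e)) − εψ(o(e)), f*(e) = ψ(o(e)) − εψ(t(e)). Given a ∈ ℂ^V, let K' ∈ H₁ be defined by K'(x,y) = a(x) for every directed edge (x,y), so that K̂'_B is the multiplication operator by a(o(e)) on ℓ²(B). Then ⟨f*, K̂'_B f⟩_{ℓ²(B)} = conj(ε)·Σ_{x∈V} ((q+1)a(x) − (Aa)(x))·ψ(x)²,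 where (Aa)(x) = Σ_{y~x} a(y). -/
/-!
Edge by edge, `conj (ψ x - ε ψ y) * (ψ y - ε ψ x) = (1 + |ε|²) ψ x ψ y - ε ψ x ² - conj ε ψ y ²`.
Summing over the neighbours `y` of `x`, the first two terms become multiples of `ψ x ²` by the
eigenvalue equation and regularity, and the last one is carried over to `x` by the symmetry of
adjacency, which turns `a` into `A a`. The resulting coefficient `(1 + |ε|²) λ - (q + 1) ε` of
`a x ψ x ²` equals `(q + 1) conj ε`, because `ε` and `conj ε` are the two roots of
`q z² - λ z + 1`: `|ε|² = 1 / q` and `ε + conj ε = 2 Re ε = λ / q`.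
-/

open Classical Finset

noncomputable section

def eps (q : ℕ) (s : ℝ) : ℂ :=
  (q : ℂ) ^ (-(1/2 : ℂ) - Complex.I * (s : ℂ))

open ComplexConjugate

theorem eps_mul_conj_eps {q : ℕ} (hq : 0 < q) (s : ℝ) :
    eps q s * conj (eps q s) = (q : ℂ)⁻¹ := by
  have hre : (-(1/2 : ℂ) - Complex.I * s).re = -(1/2) := by simp
  rw [Complex.mul_conj, Complex.normSq_eq_norm_sq, eps, Complex.norm_natCast_cpow_of_pos hq, hre,
    ← Real.rpow_natCast, ← Real.rpow_mul (Nat.cast_nonneg q)]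
  norm_num [Real.rpow_neg_one]

theorem re_eps {q : ℕ} (hq : 0 < q) (s : ℝ) : (eps q s).re = Real.cos (s * Real.log q) / √q := by
  have hq' : (q : ℂ) ≠ 0 := by exact_mod_cast hq.ne'
  have hsqrt : Real.exp (-(Real.log q * (1 / 2))) = (√q)⁻¹ := by
    rw [Real.sqrt_eq_rpow, ← Real.rpow_neg (Nat.cast_nonneg q),
      Real.rpow_def_of_pos (by exact_mod_cast hq), mul_neg]
  rw [eps, Complex.cpow_def_of_ne_zero hq', Complex.exp_re, ← Complex.natCast_log]
  simp only [Complex.mul_re, Complex.mul_im, Complex.ofReal_re, Complex.ofReal_im, Complex.sub_re,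
    Complex.sub_im, Complex.neg_re, Complex.neg_im, Complex.I_re, Complex.I_im]
  norm_num [hsqrt, ← Real.cos_neg (s * _), mul_comm s, div_eq_inv_mul]

theorem eps_add_conj_eps {q : ℕ} (hq : 0 < q) (s : ℝ) :
    eps q s + conj (eps q s) = ((2 * √q * Real.cos (s * Real.log q) : ℝ) : ℂ) / q := by
  have hq' : (0 : ℝ) < q := by exact_mod_cast hq
  rw [Complex.add_conj, re_eps hq, ← Complex.ofReal_natCast, ← Complex.ofReal_div]
  congr 1
  field_simp
  rw [Real.sq_sqrt hq'.le]

theorem conj_sub_mul_sub_ofReal (ε : ℂ) (u v : ℝ) :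
    conj ((u : ℂ) - ε * v) * ((v : ℂ) - ε * u)
      = (1 + ε * conj ε) * u * v - ε * u ^ 2 - conj ε * v ^ 2 := by
  simp only [map_sub, map_mul, Complex.conj_ofReal]
  ring

section Graph

variable {V : Type} [Fintype V] (G : SimpleGraph V)

theorem sum_mul_sum_adj_comm {R : Type*} [CommSemiring R] (f g : V → R) :
    ∑ x, f x * (∑ y, if G.Adj x y then g y else 0)
      = ∑ x, (∑ y, if G.Adj x y then f y else 0) * g x := by
  simp only [mul_sum, sum_mul, mul_ite, ite_mul, mul_zero, zero_mul]
  rw [sum_comm]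
  exact sum_congr rfl fun y _ => sum_congr rfl fun x _ => by rw [G.adj_comm]

variable {G}

theorem sum_adj_one_of_regular {d : ℕ} (hreg : RegularOfDegree G d) (x : V) :
    (∑ y, if G.Adj x y then (1 : ℂ) else 0) = d := by
  rw [sum_boole, hreg x]

theorem sum_adj_conj_sub_mul_sub {d : ℕ} (hreg : RegularOfDegree G d) {ψ : V → ℝ} {lam : ℝ}
    (heig : ∀ x, (∑ y, if G.Adj x y then ψ y else 0) = lam * ψ x) (ε : ℂ) (a : V → ℂ) (x : V) :
    (∑ y, if G.Adj x y then conj ((ψ x : ℂ) - ε * ψ y) * a x * ((ψ y : ℂ) - ε * ψ x) else 0)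
      = ((1 + ε * conj ε) * lam - ε * d) * a x * (ψ x : ℂ) ^ 2
          - conj ε * a x * ∑ y, if G.Adj x y then (ψ y : ℂ) ^ 2 else 0 := by
  have hψ : (∑ y, if G.Adj x y then (ψ y : ℂ) else 0) = lam * ψ x := by
    simpa only [Complex.ofReal_sum, apply_ite Complex.ofReal, Complex.ofReal_zero,
      Complex.ofReal_mul] using congrArg Complex.ofReal (heig x)
  have hsplit : ∀ y, (if G.Adj x y then conj ((ψ x : ℂ) - ε * ψ y) * a x * ((ψ y : ℂ) - ε * ψ x)
      else 0) = (1 + ε * conj ε) * a x * ψ x * (if G.Adj x y then (ψ y : ℂ) else 0)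
        - ε * a x * ψ x ^ 2 * (if G.Adj x y then 1 else 0)
        - conj ε * a x * (if G.Adj x y then (ψ y : ℂ) ^ 2 else 0) := fun y => by
    split_ifs
    · rw [mul_right_comm, conj_sub_mul_sub_ofReal]
      ring
    · ring
  rw [sum_congr rfl fun y _ => hsplit y, sum_sub_distrib, sum_sub_distrib, ← mul_sum, ← mul_sum,
    ← mul_sum, hψ, sum_adj_one_of_regular hreg]
  ring

theorem sum_sum_adj_conj_sub_mul_sub {d : ℕ} (hreg : RegularOfDegree G d) {ψ : V → ℝ} {lam : ℝ}
    (heig : ∀ x, (∑ y, if G.Adj x y then ψ y else 0) = lam * ψ x) (ε : ℂ) (a : V → ℂ) :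
    (∑ x, ∑ y, if G.Adj x y then conj ((ψ x : ℂ) - ε * ψ y) * a x * ((ψ y : ℂ) - ε * ψ x) else 0)
      = ∑ x, (((1 + ε * conj ε) * lam - ε * d) * a x
          - conj ε * ∑ y, if G.Adj x y then a y else 0) * (ψ x : ℂ) ^ 2 := by
  have hswap := sum_mul_sum_adj_comm G a fun y => (ψ y : ℂ) ^ 2
  rw [sum_congr rfl fun x _ => sum_adj_conj_sub_mul_sub hreg heig ε a x]
  simp only [sum_sub_distrib, sub_mul, mul_assoc, ← mul_sum, hswap]

end Graph

theorem nb_pairing_formula_multiplication_general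
    (q : ℕ) (hq : 2 ≤ q)
    (V : Type) [Fintype V] (G : SimpleGraph V)
    (hreg : RegularOfDegree G (q + 1))
    (ψ : V → ℝ) (lam s : ℝ)
    (heig : ∀ x : V, (∑ y : V, if G.Adj x y then ψ y else 0) = lam * ψ x)
    (hs : lam = 2 * Real.sqrt q * Real.cos (s * Real.log q))
    (a : V → ℂ) :
    (∑ x : V, ∑ y : V, if G.Adj x y then
        (starRingEnd ℂ) ((ψ x : ℂ) - eps q s * (ψ y : ℂ)) * a x *
          ((ψ y : ℂ) - eps q s * (ψ x : ℂ))
      else 0)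
      = (starRingEnd ℂ) (eps q s) *
          ∑ x : V, (((q : ℂ) + 1) * a x - ∑ y : V, if G.Adj x y then a y else 0) *
            (ψ x : ℂ) ^ 2 := by
  have hq₀ : 0 < q := by omega
  have hcoef : (1 + eps q s * conj (eps q s)) * lam - eps q s * ((q + 1 : ℕ) : ℂ)
      = conj (eps q s) * (q + 1) := by
    have hqC : (q : ℂ) ≠ 0 := by exact_mod_cast hq₀.ne'
    have hsum := eps_add_conj_eps hq₀ s
    rw [← hs] at hsum
    push_cast
    linear_combination (norm := (field_simp; ring)) lam * eps_mul_conj_eps hq₀ s - (q + 1) * hsum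
  rw [sum_sum_adj_conj_sub_mul_sub hreg heig, hcoef, mul_sum]
  exact sum_congr rfl fun x _ => by ring

/-- Lemma 8 (i) of the paper: for `K'(x,y) = a(x)` (so that `K̂'_B` is the multiplication
operator by `a(o(e))` on `ℓ²(B)`),
`⟨f*, K̂'_B f⟩ = conj(ε) ∑_x ((q+1) a(x) - (Aa)(x)) ψ(x)²`. -/
theorem nb_pairing_formula_multiplication
    (q : ℕ) (hq : 2 ≤ q)
    (V : Type) [Fintype V] (G : SimpleGraph V)
    (hconn : G.Connected) (hreg : RegularOfDegree G (q + 1))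
    (ψ : V → ℝ) (lam s : ℝ)
    (heig : ∀ x : V, (∑ y : V, if G.Adj x y then ψ y else 0) = lam * ψ x)
    (hlam₁ : -(2 * Real.sqrt q) < lam) (hlam₂ : lam < 2 * Real.sqrt q)
    (hs : lam = 2 * Real.sqrt q * Real.cos (s * Real.log q))
    (a : V → ℂ) :
    (∑ x : V, ∑ y : V, if G.Adj x y then
        (starRingEnd ℂ) ((ψ x : ℂ) - eps q s * (ψ y : ℂ)) * a x *
          ((ψ y : ℂ) - eps q s * (ψ x : ℂ))
      else 0)
      = (starRingEnd ℂ) (eps q s) *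
          ∑ x : V, (((q : ℂ) + 1) * a x - ∑ y : V, if G.Adj x y then a y else 0) *
            (ψ x : ℂ) ^ 2 :=
  nb_pairing_formula_multiplication_general q hq V G hreg ψ lam s heig hs a

end
end

section
/- Let q ≥ 1 be an integer, let p₁,…,p_{q+1} > 0 satisfy Σ_{j=1}^{q+1} p_j = 1, let E₀ ∈ ℝ, let w ∈ ℂ with Im w ≠ 0, and let ζ(1),…,ζ(q+1) be nonzero complex numbers satisfying E₀ = Σ_{j=1}^{q+1} p_j ζ(j) + 2w and p_j(ζ(j)^{−1} − ζ(j)) = 2w for every j. If the quotient ζ(j)/conj(ζ(j)) takes the same value u for all j ∈ {1,…,q+1}, then either p₁ = p₂ = … = p_{q+1}, or E₀ = 0 and u = −1. -/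
open Finset ComplexConjugate

/-!
With `A = p_j / ζ_j` and `B = p_j ζ_j`, so that `A B = p_j²`, the defining equation of `w` and its
conjugate (where `conj ζ_j = ζ_j / u`) form the linear system `2w = A - B`,
`2 conj w = u A - u⁻¹ B`. When `u² ≠ 1` it determines `A` and `B`, hence `p_j²`, from `u` and `w`
alone. When `u = 1` every `ζ_j`, and with it `w`, is real; when `u = -1` they are all purely
imaginary, and then so is the real number `E₀`.
-/

theorem sq_mul_one_sub_sq_sq_of_inv_sub {K : Type*} [Field K] {p z z' u a a' : K}
    (hz : z ≠ 0) (hz' : z' ≠ 0) (hzu : z = u * z')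
    (ha : p * (z⁻¹ - z) = a) (ha' : p * (z'⁻¹ - z') = a') :
    p ^ 2 * (1 - u ^ 2) ^ 2 = u * (u * a - a') * (a - u * a') := by
  have hu : u ≠ 0 := left_ne_zero_of_mul (hzu ▸ hz)
  subst ha ha' hzu
  field_simp
  ring

namespace Complex

theorem conj_inv_sub {p : ℝ} {z w : ℂ} (hw : p * (z⁻¹ - z) = 2 * w) :
    p * ((conj z)⁻¹ - conj z) = 2 * conj w := by
  simpa only [map_mul, map_sub, map_inv₀, conj_ofReal, map_ofNat] using congrArg conj hw

theorem eq_mul_conj_of_div_conj_eq {z u : ℂ} (hz : z ≠ 0) (hu : z / conj z = u) :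
    z = u * conj z :=
  (div_eq_iff ((map_ne_zero _).mpr hz)).mp hu

theorem sq_mul_one_sub_sq_sq_of_div_conj_eq {p : ℝ} {z u w : ℂ} (hz : z ≠ 0)
    (hu : z / conj z = u) (hw : p * (z⁻¹ - z) = 2 * w) :
    (p : ℂ) ^ 2 * (1 - u ^ 2) ^ 2 = 4 * u * (u * w - conj w) * (w - u * conj w) := by
  rw [sq_mul_one_sub_sq_sq_of_inv_sub hz ((map_ne_zero _).mpr hz)
    (eq_mul_conj_of_div_conj_eq hz hu) hw (conj_inv_sub hw)]
  ring

theorem conj_eq_mul_of_div_conj_eq_of_sq_eq_one {z u : ℂ} (hz : z ≠ 0)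
    (hu : z / conj z = u) (hu2 : u ^ 2 = 1) : conj z = u * z := by
  linear_combination (-u) * eq_mul_conj_of_div_conj_eq hz hu - conj z * hu2

theorem conj_eq_mul_of_inv_sub_of_sq_eq_one {p : ℝ} {z u w : ℂ} (hz : z ≠ 0)
    (hu : z / conj z = u) (hu2 : u ^ 2 = 1) (hw : p * (z⁻¹ - z) = 2 * w) :
    conj w = u * w := by
  have hw' := conj_inv_sub hw
  rw [conj_eq_mul_of_div_conj_eq_of_sq_eq_one hz hu hu2, mul_inv,
    inv_eq_of_mul_eq_one_right ((sq u).symm.trans hu2)] at hw'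
  linear_combination -(hw' - u * hw) / 2

end Complex

theorem anisotropic_phase_dichotomy_general
    (q : ℕ)
    (p : Fin (q + 1) → ℝ) (hp : ∀ j, 0 < p j)
    (E₀ : ℝ) (w : ℂ) (hw : w.im ≠ 0)
    (ζ : Fin (q + 1) → ℂ) (hζ : ∀ j, ζ j ≠ 0)
    (h1 : (E₀ : ℂ) = (∑ j, (p j : ℂ) * ζ j) + 2 * w)
    (h2 : ∀ j, (p j : ℂ) * ((ζ j)⁻¹ - ζ j) = 2 * w)
    (u : ℂ) (hu : ∀ j, ζ j / (starRingEnd ℂ) (ζ j) = u) :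
    (∀ i j, p i = p j) ∨ (E₀ = 0 ∧ u = -1) := by
  by_cases hu2 : u ^ 2 = 1
  · right
    have hconj_w := Complex.conj_eq_mul_of_inv_sub_of_sq_eq_one (hζ 0) (hu 0) hu2 (h2 0)
    have hu1 : u = -1 := by
      rcases mul_self_eq_one_iff.mp ((sq u).symm.trans hu2) with rfl | rfl
      · exact absurd (Complex.conj_eq_iff_im.mp (by simpa using hconj_w)) hw
      · rfl
    refine ⟨?_, hu1⟩
    have hconj_E₀ : conj (E₀ : ℂ) = -E₀ := by
      simp only [h1, map_add, map_sum, map_mul, Complex.conj_ofReal, map_ofNat, hconj_w,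
        fun j => Complex.conj_eq_mul_of_div_conj_eq_of_sq_eq_one (hζ j) (hu j) hu2, hu1]
      simp only [neg_one_mul, mul_neg, sum_neg_distrib]
      ring
    rw [Complex.conj_ofReal] at hconj_E₀
    exact_mod_cast self_eq_neg.mp hconj_E₀
  · left
    intro i j
    have hp_sq := fun j => Complex.sq_mul_one_sub_sq_sq_of_div_conj_eq (hζ j) (hu j) (h2 j)
    have hsq : (p i : ℂ) ^ 2 = (p j : ℂ) ^ 2 :=
      mul_right_cancel₀ (pow_ne_zero 2 (sub_ne_zero.mpr (Ne.symm hu2)))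
        ((hp_sq i).trans (hp_sq j).symm)
    exact (sq_eq_sq₀ (hp i).le (hp j).le).mp (by exact_mod_cast hsq)

/-- Lemma 12 of the paper: if the phases `ζ(j)/conj(ζ(j))` of the Green-function entries of the
anisotropic operator `A_p` on the `(q+1)`-regular tree at spectral parameter `E₀ + i0` all
coincide, then either the walk is isotropic (all `p_j` equal), or `E₀ = 0` and the common
phase is `-1`. -/
theorem anisotropic_phase_dichotomy
    (q : ℕ) (hq : 1 ≤ q)
    (p : Fin (q + 1) → ℝ) (hp : ∀ j, 0 < p j) (hpsum : ∑ j, p j = 1)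
    (E₀ : ℝ) (w : ℂ) (hw : w.im ≠ 0)
    (ζ : Fin (q + 1) → ℂ) (hζ : ∀ j, ζ j ≠ 0)
    (h1 : (E₀ : ℂ) = (∑ j, (p j : ℂ) * ζ j) + 2 * w)
    (h2 : ∀ j, (p j : ℂ) * ((ζ j)⁻¹ - ζ j) = 2 * w)
    (u : ℂ) (hu : ∀ j, ζ j / (starRingEnd ℂ) (ζ j) = u) :
    (∀ i j, p i = p j) ∨ (E₀ = 0 ∧ u = -1) :=
  anisotropic_phase_dichotomy_general q p hp E₀ w hw ζ hζ h1 h2 u hu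
end

section
/- Let N ≥ 1 and let P = (P_{ij}) and Q = (Q_{ij}) be N×N row-stochastic matrices with nonnegative real entries (Σ_j P_{ij} = Σ_j Q_{ij} = 1 for all i). Let D = diag(D₁,…,D_N) and D' = diag(D'₁,…,D'_N) be diagonal complex matrices with |D_j| = |D'_j| = 1 for all j, and set R = P·D·P·Q·D'·Q. Then for every i: Σ_m |R_{im}| ≤ 1. Moreover, if Σ_m |R_{im}| = 1 for some i, then for every m there exists c ∈ ℂ such that D_j·D'_l = c for all pairs (j,l) with P_{ij} ≠ 0, (PQ)_{jl} ≠ 0 and Q_{lm} ≠ 0. -/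
open Finset Matrix

/-! The entry `R i m` is a combination of the unit numbers `d j * d' l` with the nonnegative
weights `P i j (PQ) j l Q l m`, and these weights sum over `m, j, l` to the row sum of the
row-stochastic matrix `P (PQ) Q`, that is to `1`. The triangle inequality gives the bound; in
the case of equality every `‖R i m‖` equals its weight sum, and equality in the triangle
inequality forces the unit numbers carrying positive weight to coincide. -/

theorem Matrix.mul_mul_apply_eq_sum_prod {ι κ μ ν α : Type*} [Fintype κ] [Fintype μ]
    [NonUnitalCommSemiring α] (A : Matrix ι κ α) (B : Matrix κ μ α) (C : Matrix μ ν α)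
    (i : ι) (m : ν) :
    (A * B * C) i m = ∑ p : κ × μ, A i p.1 * B p.1 p.2 * C p.2 m := by
  simp only [mul_apply, Fintype.sum_prod_type, sum_mul]
  exact sum_comm

theorem Matrix.ofReal_mul_diagonal_mul_mul_diagonal_mul_apply {n : Type*} [Fintype n]
    [DecidableEq n] (P Q : Matrix n n ℝ) (d d' : n → ℂ) (i m : n) :
    (P.map (fun x => (x : ℂ)) * diagonal d * P.map (fun x => (x : ℂ)) *
        Q.map (fun x => (x : ℂ)) * diagonal d' * Q.map (fun x => (x : ℂ))) i m =
      ∑ p : n × n, ((P i p.1 * (P * Q) p.1 p.2 * Q p.2 m : ℝ) : ℂ) * (d p.1 * d' p.2) := by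
  have hPQ : (P * Q).map (fun x => (x : ℂ)) = P.map (fun x => (x : ℂ)) *
      Q.map (fun x => (x : ℂ)) := Matrix.map_mul (f := Complex.ofRealHom)
  have hassoc : P.map (fun x => (x : ℂ)) * diagonal d * P.map (fun x => (x : ℂ)) *
      Q.map (fun x => (x : ℂ)) * diagonal d' * Q.map (fun x => (x : ℂ)) =
      P.map (fun x => (x : ℂ)) * (diagonal d * (P * Q).map (fun x => (x : ℂ)) * diagonal d') *
        Q.map (fun x => (x : ℂ)) := by
    simp only [hPQ, Matrix.mul_assoc]
  rw [hassoc, mul_mul_apply_eq_sum_prod]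
  refine sum_congr rfl fun p _ => ?_
  simp only [mul_diagonal, diagonal_mul, map_apply]
  push_cast
  ring

namespace Complex

open scoped ComplexConjugate ComplexOrder

variable {ι : Type*} (s : Finset ι) {w : ι → ℝ} {z : ι → ℂ}

theorem norm_sum_ofReal_mul_le (hw : ∀ k ∈ s, 0 ≤ w k) (hz : ∀ k ∈ s, ‖z k‖ = 1) :
    ‖∑ k ∈ s, (w k : ℂ) * z k‖ ≤ ∑ k ∈ s, w k := by
  refine (norm_sum_le _ _).trans_eq (sum_congr rfl fun k hk => ?_)
  rw [norm_mul, Complex.norm_of_nonneg (hw k hk), hz k hk, mul_one]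

theorem exists_eq_of_norm_sum_ofReal_mul_eq (hw : ∀ k ∈ s, 0 ≤ w k)
    (hz : ∀ k ∈ s, ‖z k‖ = 1) (h : ‖∑ k ∈ s, (w k : ℂ) * z k‖ = ∑ k ∈ s, w k) :
    ∃ c : ℂ, ∀ k ∈ s, w k ≠ 0 → z k = c := by
  set S := ∑ k ∈ s, (w k : ℂ) * z k
  rcases eq_or_ne S 0 with hS | hS
  · have hw0 := (sum_eq_zero_iff_of_nonneg hw).1 (by rw [← h, hS, norm_zero])
    exact ⟨0, fun k hk hk0 => absurd (hw0 k hk) hk0⟩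
  -- Rotate `S` onto the positive real axis by `u`; then `∑ w k * re (u * z k) = ∑ w k`.
  set u : ℂ := conj S / ‖S‖
  have hu : ‖u‖ = 1 := by simp [u, hS]
  have huS : u * S = ‖S‖ := by
    rw [div_mul_eq_mul_div, conj_mul', sq, mul_div_assoc, div_self (by simpa using hS), mul_one]
  have hre_le : ∀ k ∈ s, w k * (u * z k).re ≤ w k := fun k hk =>
    mul_le_of_le_one_right (hw k hk) <| (re_le_norm _).trans <| by
      rw [norm_mul, hu, hz k hk, one_mul]
  have hsum : ∑ k ∈ s, w k * (u * z k).re = ∑ k ∈ s, w k := by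
    rw [← h, ← ofReal_re ‖S‖, ← huS, mul_sum, re_sum]
    exact sum_congr rfl fun k _ => by rw [mul_left_comm, re_ofReal_mul]
  refine ⟨u⁻¹, fun k hk hk0 => eq_inv_of_mul_eq_one_right ?_⟩
  have hre : (u * z k).re = ‖u * z k‖ := by
    rw [norm_mul, hu, hz k hk, one_mul]
    exact (mul_eq_left₀ hk0).1 ((sum_eq_sum_iff_of_le hre_le).1 hsum k hk)
  have hnonneg : 0 ≤ u * z k := re_eq_norm.1 hre
  calc u * z k = ‖u * z k‖ := by
        rw [← hre]; exact ext (ofReal_re _).symm (by simpa using hnonneg.2.symm)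
    _ = 1 := by rw [norm_mul, hu, hz k hk, one_mul, ofReal_one]

end Complex

theorem stochastic_unitary_contraction_general
    (N : ℕ)
    (P Q : Matrix (Fin N) (Fin N) ℝ)
    (hP0 : ∀ i j, 0 ≤ P i j) (hQ0 : ∀ i j, 0 ≤ Q i j)
    (hProw : ∀ i, ∑ j, P i j = 1) (hQrow : ∀ i, ∑ j, Q i j = 1)
    (d d' : Fin N → ℂ)
    (hd : ∀ j, ‖d j‖ = 1) (hd' : ∀ j, ‖d' j‖ = 1)
    (R : Matrix (Fin N) (Fin N) ℂ)
    (hR : R = P.map (fun x => (x : ℂ)) * Matrix.diagonal d * P.map (fun x => (x : ℂ)) *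
              Q.map (fun x => (x : ℂ)) * Matrix.diagonal d' * Q.map (fun x => (x : ℂ))) :
    (∀ i, (∑ m, ‖R i m‖) ≤ 1) ∧
    (∀ i, (∑ m, ‖R i m‖) = 1 →
      ∀ m, ∃ c : ℂ, ∀ j l, P i j ≠ 0 → (P * Q) j l ≠ 0 → Q l m ≠ 0 →
        d j * d' l = c) := by
  have hPs : P ∈ rowStochastic ℝ (Fin N) := mem_rowStochastic_iff_sum.2 ⟨hP0, hProw⟩
  have hQs : Q ∈ rowStochastic ℝ (Fin N) := mem_rowStochastic_iff_sum.2 ⟨hQ0, hQrow⟩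
  have hPQs : P * Q ∈ rowStochastic ℝ (Fin N) := mul_mem hPs hQs
  set w : Fin N → Fin N → Fin N × Fin N → ℝ :=
    fun i m p => P i p.1 * (P * Q) p.1 p.2 * Q p.2 m
  have hw0 : ∀ i m p, 0 ≤ w i m p := fun i m p =>
    mul_nonneg (mul_nonneg (hP0 _ _) (nonneg_of_mem_rowStochastic hPQs)) (hQ0 _ _)
  have hw1 : ∀ i, ∑ m, ∑ p, w i m p = 1 := fun i => by
    simp only [w, ← mul_mul_apply_eq_sum_prod]
    exact sum_row_of_mem_rowStochastic (mul_mem (mul_mem hPs hPQs) hQs) i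
  have hunit : ∀ p : Fin N × Fin N, ‖d p.1 * d' p.2‖ = 1 := fun p => by
    rw [norm_mul, hd, hd', one_mul]
  have hRw : ∀ i m, R i m = ∑ p, (w i m p : ℂ) * (d p.1 * d' p.2) := fun i m => by
    rw [hR, Matrix.ofReal_mul_diagonal_mul_mul_diagonal_mul_apply]
  have hle : ∀ i m, ‖R i m‖ ≤ ∑ p, w i m p := fun i m =>
    hRw i m ▸ Complex.norm_sum_ofReal_mul_le _ (fun p _ => hw0 i m p) (fun p _ => hunit p)
  refine ⟨fun i => (sum_le_sum fun m _ => hle i m).trans_eq (hw1 i), fun i hi m => ?_⟩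
  have heq : ‖R i m‖ = ∑ p, w i m p :=
    (sum_eq_sum_iff_of_le fun m _ => hle i m).1 (hi.trans (hw1 i).symm) m (mem_univ m)
  obtain ⟨c, hc⟩ := Complex.exists_eq_of_norm_sum_ofReal_mul_eq _ (fun p _ => hw0 i m p)
    (fun p _ => hunit p) (hRw i m ▸ heq)
  exact ⟨c, fun j l hj hjl hl => hc (j, l) (mem_univ _) (mul_ne_zero (mul_ne_zero hj hjl) hl)⟩

/-- The matrix lemma inside the proof of Lemma 9 of the paper: if `P, Q` are row-stochastic
matrices with nonnegative entries, `D, D'` are diagonal unitary matrices, and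
`R = P·D·P·Q·D'·Q`, then every row of `R` has `ℓ¹`-norm at most `1`, and in the case of
equality the products `D_j D'_l` are constant along the support of the corresponding
transitions. -/
theorem stochastic_unitary_contraction
    (N : ℕ) (hN : 1 ≤ N)
    (P Q : Matrix (Fin N) (Fin N) ℝ)
    (hP0 : ∀ i j, 0 ≤ P i j) (hQ0 : ∀ i j, 0 ≤ Q i j)
    (hProw : ∀ i, ∑ j, P i j = 1) (hQrow : ∀ i, ∑ j, Q i j = 1)
    (d d' : Fin N → ℂ)
    (hd : ∀ j, ‖d j‖ = 1) (hd' : ∀ j, ‖d' j‖ = 1)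
    (R : Matrix (Fin N) (Fin N) ℂ)
    (hR : R = P.map (fun x => (x : ℂ)) * Matrix.diagonal d * P.map (fun x => (x : ℂ)) *
              Q.map (fun x => (x : ℂ)) * Matrix.diagonal d' * Q.map (fun x => (x : ℂ))) :
    (∀ i, (∑ m, ‖R i m‖) ≤ 1) ∧
    (∀ i, (∑ m, ‖R i m‖) = 1 →
      ∀ m, ∃ c : ℂ, ∀ j l, P i j ≠ 0 → (P * Q) j l ≠ 0 → Q l m ≠ 0 →
        d j * d' l = c) :=
  stochastic_unitary_contraction_general N P Q hP0 hQ0 hProw hQrow d d' hd hd' R hR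
end
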